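/- Fix c ≥ 1 and set v_n := (2c)^{−|n|} for n ∈ ℤ. Let V be the bounded invertible operator on ℓ²(ℤ,ℂ) with (Vf)(n) = (v_n/v_{n−1})·f(n−1). Define f ∈ ℓ²(ℤ,ℂ) by f(n) = 1/|n| for n ≠ 0 and f(0) = 0 (this f is indeed square-summable). Then for every integer N (positive or negative), ‖V^N f‖² ≥ (2c)^{2|N|}/(|N|+1) ≥ 2^{|N|}·c^{2|N|}; moreover ‖V^N f‖ = ‖V^{−N} f‖ for all N. In particular ‖V^N f‖ grows at least like (√2·c)^{|N|} as N → ±∞. -/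

import Mathlib

/-!
Powers of a weighted shift are weighted shifts: `(V^N g) n = (v n / v (n - N)) g (n - N)`.
Since `v` and `‖f‖` are even, reflecting `n ↦ -n` turns the coordinates of `V^N f` into those of
`V^(-N) f`, which gives the symmetry and reduces the bound to `N = k ≥ 0`. There the coordinates
`n = -(j + 1)` carry the constant weight `v (-(j+1)) / v (-(j+k+1)) = (2c)^k`, so
`‖V^k f‖² ≥ (2c)^(2k) ∑_{j > k} 1/j² ≥ (2c)^(2k)/(k+1)`, the last step by comparison with the
telescoping series `∑ 1/(j(j+1))`. Finally `k + 1 ≤ 2^k`.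
-/

noncomputable section
open Real

/-- The Hilbert space `ℓ²(ℤ, ℂ)` of square-summable two-sided complex sequences. -/
abbrev l2 : Type := lp (fun _ : ℤ => ℂ) 2

theorem lp.hasSum_norm_sq {ι : Type*} {E : ι → Type*} [∀ i, NormedAddCommGroup (E i)]
    (g : lp E 2) : HasSum (fun i => ‖g i‖ ^ 2) (‖g‖ ^ 2) := by
  simpa using lp.hasSum_norm (p := 2) (by norm_num) g

theorem lp.norm_eq_of_norm_apply_neg {E : Type*} [NormedAddCommGroup E]
    {g h : lp (fun _ : ℤ => E) 2} (hgh : ∀ n, ‖g (-n)‖ = ‖h n‖) : ‖g‖ = ‖h‖ := by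
  have hg := (Equiv.neg ℤ).hasSum_iff.mpr (lp.hasSum_norm_sq g)
  simp only [Function.comp_def, Equiv.neg_apply, hgh] at hg
  exact (pow_left_inj₀ (norm_nonneg _) (norm_nonneg _) two_ne_zero).mp
    (hg.unique (lp.hasSum_norm_sq h))

def IsWeightedShift (v : ℤ → ℝ) (T : l2 → l2) : Prop :=
  ∀ (g : l2) (n : ℤ), T g n = ((v n / v (n - 1) : ℝ) : ℂ) * g (n - 1)

namespace IsWeightedShift

variable {v : ℤ → ℝ} {V : (l2 →L[ℂ] l2)ˣ}

theorem inv_apply (hv₀ : ∀ n, v n ≠ 0) (hV : IsWeightedShift v ⇑(V : l2 →L[ℂ] l2))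
    (g : l2) (n : ℤ) :
    ((V⁻¹ : (l2 →L[ℂ] l2)ˣ) : l2 →L[ℂ] l2) g n
      = ((v n / v (n + 1) : ℝ) : ℂ) * g (n + 1) := by
  have h := hV (((V⁻¹ : (l2 →L[ℂ] l2)ˣ) : l2 →L[ℂ] l2) g) (n + 1)
  rw [← mul_apply_eq_comp, ← Units.val_mul, mul_inv_cancel, Units.val_one, one_apply_eq_self,
    add_sub_cancel_right] at h
  rw [h, ← mul_assoc, ← Complex.ofReal_mul, div_mul_div_cancel₀ (hv₀ (n + 1)), div_self (hv₀ n),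
    Complex.ofReal_one, one_mul]

theorem zpow_apply (hv₀ : ∀ n, v n ≠ 0) (hV : IsWeightedShift v ⇑(V : l2 →L[ℂ] l2))
    (N : ℤ) (g : l2) (n : ℤ) :
    ((V ^ N : (l2 →L[ℂ] l2)ˣ) : l2 →L[ℂ] l2) g n
      = ((v n / v (n - N) : ℝ) : ℂ) * g (n - N) := by
  induction N using Int.induction_on generalizing g n with
  | zero => simp [div_self (hv₀ n)]
  | succ k ih =>
    rw [zpow_add_one, Units.val_mul, mul_apply_eq_comp, ih, hV, ← mul_assoc,
      ← Complex.ofReal_mul, div_mul_div_cancel₀ (hv₀ _), sub_sub]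
  | pred k ih =>
    rw [zpow_sub_one, Units.val_mul, mul_apply_eq_comp, ih, hV.inv_apply hv₀,
      ← mul_assoc, ← Complex.ofReal_mul, div_mul_div_cancel₀ (hv₀ _), sub_add]

theorem norm_zpow_neg (hv₀ : ∀ n, v n ≠ 0) (hV : IsWeightedShift v ⇑(V : l2 →L[ℂ] l2))
    (hv_neg : ∀ n, v (-n) = v n) {g : l2} (hg : ∀ n, ‖g (-n)‖ = ‖g n‖) (N : ℤ) :
    ‖((V ^ (-N) : (l2 →L[ℂ] l2)ˣ) : l2 →L[ℂ] l2) g‖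
      = ‖((V ^ N : (l2 →L[ℂ] l2)ˣ) : l2 →L[ℂ] l2) g‖ :=
  lp.norm_eq_of_norm_apply_neg fun n => by
    rw [hV.zpow_apply hv₀, hV.zpow_apply hv₀, norm_mul, norm_mul, show -n - -N = -(n - N) by ring,
      hv_neg, hv_neg, hg]

end IsWeightedShift

theorem hasSum_inv_mul_add_one {a : ℝ} (ha : 0 < a) :
    HasSum (fun j : ℕ => ((j + a) * (j + a + 1))⁻¹) a⁻¹ := by
  rw [hasSum_iff_tendsto_nat_of_nonneg (fun j => by positivity)]
  have htelescope :
      ∀ n : ℕ, ∑ j ∈ Finset.range n, ((j + a) * (j + a + 1))⁻¹ = a⁻¹ - (n + a)⁻¹ := by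
    intro n
    convert Finset.sum_range_sub' (fun j : ℕ => ((j : ℝ) + a)⁻¹) n using 2 with j
    · push_cast
      field_simp
      ring
    · simp
  simp_rw [htelescope]
  simpa using (tendsto_const_nhds (x := a⁻¹)).sub
    (tendsto_natCast_atTop_atTop.atTop_add tendsto_const_nhds).inv_tendsto_atTop

theorem inv_add_one_le_tsum_inv_sq (k : ℕ) :
    ((k : ℝ) + 1)⁻¹ ≤ ∑' j : ℕ, (((j : ℝ) + k + 1) ^ 2)⁻¹ := by
  have hsummable : Summable fun j : ℕ => (((j : ℝ) + k + 1) ^ 2)⁻¹ := by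
    have := (summable_nat_add_iff (k + 1)).mpr (Real.summable_nat_pow_inv.mpr one_lt_two)
    simpa [add_assoc] using this
  rw [← (hasSum_inv_mul_add_one (a := (k : ℝ) + 1) (by positivity)).tsum_eq]
  refine Summable.tsum_le_tsum (fun j => ?_) (hasSum_inv_mul_add_one (by positivity)).summable
    hsummable
  exact inv_anti₀ (by positivity) (by rw [← add_assoc]; nlinarith)

theorem two_pow_mul_pow_le (c : ℝ) (k : ℕ) :
    2 ^ k * c ^ (2 * k) ≤ (2 * c) ^ (2 * k) / (k + 1) := by
  have hk : (k : ℝ) + 1 ≤ 2 ^ k := by exact_mod_cast Nat.lt_two_pow_self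
  have hc : 0 ≤ c ^ (2 * k) := by rw [pow_mul]; positivity
  rw [le_div_iff₀ (by positivity)]
  calc 2 ^ k * c ^ (2 * k) * (k + 1) ≤ 2 ^ k * c ^ (2 * k) * 2 ^ k := by gcongr
    _ = (2 * c) ^ (2 * k) := by ring

section InverseSquareVector

variable {c : ℝ} {v : ℤ → ℝ} {V : (l2 →L[ℂ] l2)ˣ} {f : l2}

theorem norm_zpow_natCast_apply_neg_succ (hc : 0 < c)
    (hv : ∀ n : ℤ, v n = (2 * c) ^ (-|(n : ℝ)|))
    (hV : IsWeightedShift v ⇑(V : l2 →L[ℂ] l2))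
    (hf : ∀ n : ℤ, f n = if n = 0 then 0 else ((|(n : ℝ)|⁻¹ : ℝ) : ℂ)) (k j : ℕ) :
    ‖((V ^ (k : ℤ) : (l2 →L[ℂ] l2)ˣ) : l2 →L[ℂ] l2) f (-(j + 1))‖
      = (2 * c) ^ k * ((j : ℝ) + k + 1)⁻¹ := by
  have hv_natCast_neg : ∀ m : ℕ, v (-m) = (2 * c) ^ (-(m : ℝ)) := fun m => by simp [hv]
  have hv0 : ∀ n, v n ≠ 0 := fun n => by rw [hv]; positivity
  rw [hV.zpow_apply hv0, norm_mul, Complex.norm_real, hf, if_neg (by omega), Complex.norm_real,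
    show -((j : ℤ) + 1) = -((j + 1 : ℕ) : ℤ) by push_cast; ring,
    show -((j + 1 : ℕ) : ℤ) - k = -((j + k + 1 : ℕ) : ℤ) by push_cast; ring,
    hv_natCast_neg, hv_natCast_neg, ← Real.rpow_sub (by positivity)]
  push_cast
  rw [abs_neg, abs_of_pos (by positivity), Real.norm_of_nonneg (by positivity),
    Real.norm_of_nonneg (by positivity), show -((j : ℝ) + 1) - -(j + k + 1) = k by ring,
    Real.rpow_natCast]

theorem sq_norm_zpow_natCast_ge (hc : 0 < c) (hv : ∀ n : ℤ, v n = (2 * c) ^ (-|(n : ℝ)|))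
    (hV : IsWeightedShift v ⇑(V : l2 →L[ℂ] l2))
    (hf : ∀ n : ℤ, f n = if n = 0 then 0 else ((|(n : ℝ)|⁻¹ : ℝ) : ℂ)) (k : ℕ) :
    (2 * c) ^ (2 * k) / ((k : ℝ) + 1)
      ≤ ‖((V ^ (k : ℤ) : (l2 →L[ℂ] l2)ˣ) : l2 →L[ℂ] l2) f‖ ^ 2 := by
  set g := ((V ^ (k : ℤ) : (l2 →L[ℂ] l2)ˣ) : l2 →L[ℂ] l2) f
  have hinj : Function.Injective fun j : ℕ => -((j : ℤ) + 1) := fun i j h => by simpa using h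
  calc (2 * c) ^ (2 * k) / ((k : ℝ) + 1)
      ≤ (2 * c) ^ (2 * k) * ∑' j : ℕ, (((j : ℝ) + k + 1) ^ 2)⁻¹ := by
        rw [div_eq_mul_inv]
        gcongr
        exact inv_add_one_le_tsum_inv_sq k
    _ = ∑' j : ℕ, ‖g (-(j + 1))‖ ^ 2 := by
        rw [← tsum_mul_left]
        congr 1 with j
        rw [norm_zpow_natCast_apply_neg_succ hc hv hV hf, mul_pow ((2 * c) ^ k), inv_pow,
          ← pow_mul, mul_comm k]
    _ ≤ ∑' n : ℤ, ‖g n‖ ^ 2 :=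
        tsum_comp_le_tsum_of_inj (lp.hasSum_norm_sq g).summable (fun n => by positivity) hinj
    _ = ‖g‖ ^ 2 := (lp.hasSum_norm_sq g).tsum_eq

theorem norm_zpow_neg_eq (hc : 0 < c) (hv : ∀ n : ℤ, v n = (2 * c) ^ (-|(n : ℝ)|))
    (hV : IsWeightedShift v ⇑(V : l2 →L[ℂ] l2))
    (hf : ∀ n : ℤ, f n = if n = 0 then 0 else ((|(n : ℝ)|⁻¹ : ℝ) : ℂ)) (N : ℤ) :
    ‖((V ^ (-N) : (l2 →L[ℂ] l2)ˣ) : l2 →L[ℂ] l2) f‖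
      = ‖((V ^ N : (l2 →L[ℂ] l2)ˣ) : l2 →L[ℂ] l2) f‖ := by
  refine hV.norm_zpow_neg (fun n => by rw [hv]; positivity) (fun n => by simp [hv])
    (fun n => ?_) N
  simp [hf]

end InverseSquareVector

/-- For the weighted bilateral shift `V` with weights `v n = (2c)^(−|n|)` (`c ≥ 1`) and the
vector `f` with `f n = 1/|n|` (`n ≠ 0`), `f 0 = 0`, one has, for every integer `N`,
`‖V^N f‖² ≥ (2c)^(2|N|)/(|N|+1) ≥ 2^|N|·c^(2|N|)`, and moreover `‖V^N f‖ = ‖V^(−N) f‖`. -/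
theorem stmt17 (c : ℝ) (hc : 1 ≤ c)
    (v : ℤ → ℝ) (hv : ∀ n : ℤ, v n = (2 * c) ^ (-|(n : ℝ)|))
    (V : (l2 →L[ℂ] l2)ˣ)
    (hV : ∀ (g : l2) (n : ℤ),
      (V : l2 →L[ℂ] l2) g n = ((v n / v (n - 1) : ℝ) : ℂ) * g (n - 1))
    (f : l2) (hf : ∀ n : ℤ, f n = if n = 0 then 0 else ((|(n : ℝ)|⁻¹ : ℝ) : ℂ)) :
    ∀ N : ℤ,
      (2 * c) ^ (2 * |N|) / ((|N| : ℝ) + 1) ≤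
        ‖((V ^ N : (l2 →L[ℂ] l2)ˣ) : l2 →L[ℂ] l2) f‖ ^ 2 ∧
      (2 : ℝ) ^ |N| * c ^ (2 * |N|) ≤ (2 * c) ^ (2 * |N|) / ((|N| : ℝ) + 1) ∧
      ‖((V ^ N : (l2 →L[ℂ] l2)ˣ) : l2 →L[ℂ] l2) f‖ =
        ‖((V ^ (-N) : (l2 →L[ℂ] l2)ˣ) : l2 →L[ℂ] l2) f‖ := by
  have hc₀ : 0 < c := by linarith
  intro N
  set k := N.natAbs
  have hNk : |N| = k := Int.abs_eq_natAbs N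
  have hNk' : |(N : ℝ)| = k := by rw [← Int.cast_abs, hNk, Int.cast_natCast]
  have h2k : 2 * |N| = ((2 * k : ℕ) : ℤ) := by rw [hNk]; push_cast; ring
  have hnorm : ‖((V ^ N : (l2 →L[ℂ] l2)ˣ) : l2 →L[ℂ] l2) f‖
      = ‖((V ^ (k : ℤ) : (l2 →L[ℂ] l2)ˣ) : l2 →L[ℂ] l2) f‖ := by
    rcases Int.natAbs_eq N with hN | hN
    · rw [← hN]
    · rw [hN, norm_zpow_neg_eq hc₀ hv hV hf]
  refine ⟨?_, ?_, (norm_zpow_neg_eq hc₀ hv hV hf N).symm⟩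
  · rw [hnorm, h2k, hNk', zpow_natCast]
    exact sq_norm_zpow_natCast_ge hc₀ hv hV hf k
  · rw [h2k, hNk', hNk, zpow_natCast, zpow_natCast]
    exact two_pow_mul_pow_le c k
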